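/- arXiv:1602.00869 — 6 statements merged into one kernel-verified Lean document; each statement's English description precedes it below -/
import Mathlib

section
/- For W geometric with parameter c ∈ (0,1) and q ∈ (0,1), the quantity R_{q,w} = Σ_{s=w}^∞ C(s,w)^2 (1-q)^{2(s-w)} q^{-2s} f_{W_q}(s), where f_{W_q}(s) = (c_q/c)c_q^{s-1}(1-c_q) for s ≥ 1 and c_q = qc/(1 - c(1-q)), is finite if and only if c < q/(1-q). -/
/-!
Writing `x = (1-q)² c_q / q²`, the `k`-th term of the series is a positive constant times
`C(w+k, w)² xᵏ`, and such a series converges iff `x < 1`: the squared binomial coefficient only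
contributes polynomial growth. Finally `x` is exactly the ratio `(q⁻¹ - 1) c(1-q) / (1 - c(1-q))`,
which is `< 1` iff `c(1-q) < q`.
-/

lemma summable_natCast_add_pow_mul_geometric (w p : ℕ) {x : ℝ} (hx0 : 0 < x) (hx1 : x < 1) :
    Summable (fun n : ℕ => ((n + w : ℕ) : ℝ) ^ p * x ^ n) := by
  have hgeom : Summable (fun n : ℕ => (n : ℝ) ^ p * x ^ n) :=
    summable_pow_mul_geometric_of_norm_lt_one p (by rwa [Real.norm_of_nonneg hx0.le])
  have hshift : Summable (fun n : ℕ => ((n + w : ℕ) : ℝ) ^ p * x ^ (n + w)) :=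
    (summable_nat_add_iff w).mpr hgeom
  refine (hshift.mul_left (x ^ w)⁻¹).congr fun n => ?_
  rw [pow_add]
  field_simp

lemma summable_choose_sq_mul_geometric_iff (w : ℕ) {x : ℝ} (hx : 0 < x) :
    Summable (fun k : ℕ => ((w + k).choose w : ℝ) ^ 2 * x ^ k) ↔ x < 1 := by
  constructor
  · intro h
    have hgeom : Summable (fun k : ℕ => x ^ k) := by
      refine h.of_nonneg_of_le (fun k => by positivity) fun k =>
        le_mul_of_one_le_left (by positivity) (one_le_pow₀ ?_)
      exact (by exact_mod_cast Nat.choose_pos (Nat.le_add_right w k))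
    simpa [abs_of_pos hx] using summable_geometric_iff_norm_lt_one.mp hgeom
  · intro hx1
    refine (summable_natCast_add_pow_mul_geometric w (w * 2) hx hx1).of_nonneg_of_le
      (fun k => by positivity) fun k => ?_
    have hchoose : ((w + k).choose w : ℝ) ≤ ((k + w : ℕ) : ℝ) ^ w := by
      rw [add_comm k]
      exact_mod_cast Nat.choose_le_pow (w + k) w
    rw [pow_mul]
    gcongr

lemma thinned_ratio_lt_one_iff {c q : ℝ} (hq0 : 0 < q) (hq1 : q < 1)
    (hd : 0 < 1 - c * (1 - q)) :
    (1 - q) ^ 2 * (q * c / (1 - c * (1 - q))) / q ^ 2 < 1 ↔ c < q / (1 - q) := by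
  have hq1' : 0 < 1 - q := by linarith
  rw [lt_div_iff₀ hq1', div_lt_one (by positivity), mul_div_assoc', div_lt_iff₀ hd]
  constructor <;> intro h <;> nlinarith

lemma choose_sq_mul_thinned_term_eq {w : ℕ} (hw : 1 ≤ w) (k : ℕ) {a c q : ℝ} (hq : q ≠ 0) :
    ((w + k).choose w : ℝ) ^ 2 * (1 - q) ^ (2 * k) / q ^ (2 * (w + k))
        * ((a / c) * a ^ (w + k - 1) * (1 - a))
      = (a / c) * a ^ (w - 1) * (1 - a) / q ^ (2 * w)
        * (((w + k).choose w : ℝ) ^ 2 * ((1 - q) ^ 2 * a / q ^ 2) ^ k) := by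
  rw [show w + k - 1 = (w - 1) + k by omega, mul_add, pow_add, pow_add, div_pow, mul_pow,
    ← pow_mul, ← pow_mul]
  field_simp

/-- For `W` geometric with parameter `c` thinned with retention probability `q`, the series
`R_{q,w} = Σ_{s=w}^∞ C(s,w)^2 (1-q)^(2(s-w)) q^(-2s) f_{W_q}(s)`, with
`f_{W_q}(s) = (c_q/c)c_q^(s-1)(1-c_q)` and `c_q = qc/(1-c(1-q))`, converges
if and only if `c < q/(1-q)`. -/
theorem stmt6 (c q : ℝ) (hc : c ∈ Set.Ioo (0:ℝ) 1) (hq : q ∈ Set.Ioo (0:ℝ) 1)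
    (w : ℕ) (hw : 1 ≤ w) (c_q : ℝ) (hcq : c_q = q * c / (1 - c * (1 - q))) :
    Summable (fun k : ℕ =>
      (((w + k).choose w : ℝ)) ^ 2 * (1 - q) ^ (2 * k) / q ^ (2 * (w + k))
        * ((c_q / c) * c_q ^ (w + k - 1) * (1 - c_q)))
      ↔ c < q / (1 - q) := by
  obtain ⟨hc0, hc1⟩ := hc
  obtain ⟨hq0, hq1⟩ := hq
  have hd : 0 < 1 - c * (1 - q) := by nlinarith
  have hcq0 : 0 < c_q := by rw [hcq]; positivity
  have hcq1 : c_q < 1 := by rw [hcq, div_lt_one hd]; nlinarith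
  have hK : 0 < (c_q / c) * c_q ^ (w - 1) * (1 - c_q) / q ^ (2 * w) := by
    have : 0 < 1 - c_q := by linarith
    positivity
  simp_rw [choose_sq_mul_thinned_term_eq hw _ hq0.ne', summable_mul_left_iff hK.ne',
    summable_choose_sq_mul_geometric_iff w (by positivity : 0 < (1 - q) ^ 2 * c_q / q ^ 2), hcq]
  exact thinned_ratio_lt_one_iff hq0 hq1 hd
end

section
/- Let L be a slowly varying function at infinity and β > 0. Define g₁, g̃₁: for integers n ≥ 2, g₁(y) = n - 1 if n-1 + (1/(2β))log L(e^{2n-2}) ≤ y < n-1 + (1/(2β))log L(e^{2n}), and g₁(y) = y - (1/(2β))log L(e^{2n}) if n-1 + (1/(2β))log L(e^{2n}) ≤ y < n + (1/(2β))log L(e^{2n}); and g̃₁(y) = y - (1/(2β))log L(e^{2n-2}) if n-1 + (1/(2β))log L(e^{2n-2}) ≤ y < n + (1/(2β))log L(e^{2n}). Then g̃₁(y) - g₁(y) → 0 as y → ∞. -/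
open Filter Topology Real

/-!
With `c n = (1 / (2β)) log L(e^{2n})`, slow variation (applied with `a = e²`) gives
`c (n + 1) - c n → 0`, so the breakpoints `n + c n` increase to infinity. A large `y` therefore
lies in some piece `[(n - 1) + c (n - 1), n + c n)` with `n` large, and on that piece
`|g̃₁ y - g₁ y| ≤ |c n - c (n - 1)|`.
-/

theorem tendsto_log_comp_mul_sub_log {L : ℝ → ℝ} {a : ℝ}
    (hL : Tendsto (fun x => L (a * x) / L x) atTop (𝓝 1)) :
    Tendsto (fun x => log (L (a * x)) - log (L x)) atTop (𝓝 0) := by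
  have hlog := (continuousAt_log one_ne_zero).tendsto.comp hL
  rw [log_one] at hlog
  refine hlog.congr' ?_
  filter_upwards [hL.eventually_ne one_ne_zero] with x hx
  -- the ratio is eventually nonzero, and `u / 0 = 0`, so neither value of `L` vanishes
  obtain ⟨hnum, hden⟩ := div_ne_zero_iff.mp hx
  exact log_div hnum hden

theorem tendsto_log_comp_exp_succ_sub {L : ℝ → ℝ} {r : ℝ} (hr : 0 < r)
    (hL : Tendsto (fun x => L (exp r * x) / L x) atTop (𝓝 1)) :
    Tendsto (fun n : ℕ => log (L (exp (r * ↑(n + 1)))) - log (L (exp (r * n)))) atTop (𝓝 0) := by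
  have hexp : Tendsto (fun n : ℕ => exp (r * n)) atTop atTop :=
    tendsto_exp_atTop.comp (tendsto_natCast_atTop_atTop.const_mul_atTop hr)
  refine ((tendsto_log_comp_mul_sub_log hL).comp hexp).congr fun n => ?_
  simp only [Function.comp, ← exp_add, Nat.cast_succ, mul_add_one, add_comm r]

theorem tendsto_atTop_of_tendsto_succ_sub {b : ℕ → ℝ} {l : ℝ} (hl : 0 < l)
    (h : Tendsto (fun n => b (n + 1) - b n) atTop (𝓝 l)) : Tendsto b atTop atTop := by
  have hmean : Tendsto (fun n : ℕ => (n : ℝ) * ((n⁻¹ : ℝ) * ∑ i ∈ Finset.range n, (b (i + 1) - b i)))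
      atTop atTop :=
    tendsto_natCast_atTop_atTop.atTop_mul_pos hl h.cesaro
  refine (tendsto_atTop_add_const_right _ (b 0) hmean).congr' ?_
  filter_upwards [eventually_ne_atTop 0] with n hn
  rw [Finset.sum_range_sub, mul_inv_cancel_left₀ (Nat.cast_ne_zero.mpr hn), sub_add_cancel]

theorem eventually_exists_mem_Ico_of_tendsto_atTop {b : ℕ → ℝ} (hb : Tendsto b atTop atTop)
    (N : ℕ) : ∀ᶠ y in atTop, ∃ m ≥ N, y ∈ Set.Ico (b m) (b (m + 1)) := by
  filter_upwards [(eventually_all_finset (Finset.range (N + 1))).2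
    fun k _ => eventually_ge_atTop (b k)] with y hy
  have hex : ∃ n, y < b n := (hb.eventually_gt_atTop y).exists
  have hN : N < Nat.find hex := by
    by_contra! hle
    exact (Nat.find_spec hex).not_ge (hy _ (Finset.mem_range.mpr (Nat.lt_succ_of_le hle)))
  refine ⟨Nat.find hex - 1, by omega, not_lt.mp (Nat.find_min hex (by omega)), ?_⟩
  rw [Nat.sub_add_cancel (by omega)]
  exact Nat.find_spec hex

theorem abs_sub_le_of_mem_Ico {c : ℕ → ℝ} {m : ℕ} {y : ℝ} {g g' : ℝ → ℝ}
    (hy : y ∈ Set.Ico (m + c m) (m + 1 + c (m + 1)))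
    (hg_flat : y < m + c (m + 1) → g y = m) (hg_slope : m + c (m + 1) ≤ y → g y = y - c (m + 1))
    (hg' : g' y = y - c m) : |g' y - g y| ≤ |c (m + 1) - c m| := by
  obtain ⟨hy₀, hy₁⟩ := hy
  rw [hg']
  rcases lt_or_ge y (m + c (m + 1)) with hflat | hslope
  · rw [hg_flat hflat, abs_le]
    constructor <;> linarith [le_abs_self (c (m + 1) - c m)]
  · rw [hg_slope hslope, sub_sub_sub_cancel_left]

theorem stmt7_general (L : ℝ → ℝ)
    (hL : ∀ a : ℝ, 0 < a → Tendsto (fun x => L (a * x) / L x) atTop (nhds 1))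
    (β : ℝ) (g1 gt1 : ℝ → ℝ)
    (hg1a : ∀ n : ℕ, 2 ≤ n → ∀ y : ℝ,
      (n : ℝ) - 1 + 1 / (2 * β) * Real.log (L (Real.exp (2 * (n : ℝ) - 2))) ≤ y →
      y < (n : ℝ) - 1 + 1 / (2 * β) * Real.log (L (Real.exp (2 * (n : ℝ)))) →
      g1 y = (n : ℝ) - 1)
    (hg1b : ∀ n : ℕ, 2 ≤ n → ∀ y : ℝ,
      (n : ℝ) - 1 + 1 / (2 * β) * Real.log (L (Real.exp (2 * (n : ℝ)))) ≤ y →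
      y < (n : ℝ) + 1 / (2 * β) * Real.log (L (Real.exp (2 * (n : ℝ)))) →
      g1 y = y - 1 / (2 * β) * Real.log (L (Real.exp (2 * (n : ℝ)))))
    (hgt1 : ∀ n : ℕ, 2 ≤ n → ∀ y : ℝ,
      (n : ℝ) - 1 + 1 / (2 * β) * Real.log (L (Real.exp (2 * (n : ℝ) - 2))) ≤ y →
      y < (n : ℝ) + 1 / (2 * β) * Real.log (L (Real.exp (2 * (n : ℝ)))) →
      gt1 y = y - 1 / (2 * β) * Real.log (L (Real.exp (2 * (n : ℝ) - 2)))) :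
    Tendsto (fun y => gt1 y - g1 y) atTop (nhds 0) := by
  set c : ℕ → ℝ := fun n => 1 / (2 * β) * log (L (exp (2 * n))) with hc
  have hdiff : Tendsto (fun m => c (m + 1) - c m) atTop (𝓝 0) := by
    simpa only [hc, mul_sub, mul_zero] using
      (tendsto_log_comp_exp_succ_sub two_pos (hL _ (exp_pos 2))).const_mul (1 / (2 * β))
  have hb : Tendsto (fun m : ℕ => m + c m) atTop atTop := by
    refine tendsto_atTop_of_tendsto_succ_sub one_pos ?_
    simpa [add_sub_add_comm] using hdiff.const_add 1
  rw [Metric.tendsto_nhds]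
  intro ε hε
  obtain ⟨N, hN⟩ := eventually_atTop.mp (hdiff.eventually (Metric.ball_mem_nhds 0 hε))
  filter_upwards [eventually_exists_mem_Ico_of_tendsto_atTop hb (max N 1)] with y ⟨m, hm, hy⟩
  -- `y` lies in the piece indexed by `n = m + 1` in the hypotheses
  have hprev : 1 / (2 * β) * log (L (exp (2 * ((m : ℝ) + 1) - 2))) = c m := by
    simp only [hc, mul_add, mul_one, add_sub_cancel_right]
  have hcur : 1 / (2 * β) * log (L (exp (2 * ((m : ℝ) + 1)))) = c (m + 1) := by
    simp only [hc, Nat.cast_succ]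
  have hn : 2 ≤ m + 1 := by omega
  have hflat := hg1a (m + 1) hn y
  have hslope := hg1b (m + 1) hn y
  have htilde := hgt1 (m + 1) hn y
  simp only [Nat.cast_succ, add_sub_cancel_right] at hflat hslope htilde hy
  simp only [hprev, hcur] at hflat hslope htilde
  rw [dist_zero_right, Real.norm_eq_abs]
  calc |gt1 y - g1 y| ≤ |c (m + 1) - c m| :=
        abs_sub_le_of_mem_Ico hy (hflat hy.1) (fun h => hslope h hy.2) (htilde hy.1 hy.2)
    _ < ε := by simpa using hN m (by omega)

/-- For `L` slowly varying and `β > 0`, the piecewise functions `g₁` and `g̃₁` from the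
domain-of-attraction proof satisfy `g̃₁(y) - g₁(y) → 0` as `y → ∞`. -/
theorem stmt7 (L : ℝ → ℝ) (hLpos : ∀ x, 0 < L x)
    (hL : ∀ a : ℝ, 0 < a → Tendsto (fun x => L (a * x) / L x) atTop (nhds 1))
    (β : ℝ) (hβ : 0 < β) (g1 gt1 : ℝ → ℝ)
    (hg1a : ∀ n : ℕ, 2 ≤ n → ∀ y : ℝ,
      (n : ℝ) - 1 + 1 / (2 * β) * Real.log (L (Real.exp (2 * (n : ℝ) - 2))) ≤ y →
      y < (n : ℝ) - 1 + 1 / (2 * β) * Real.log (L (Real.exp (2 * (n : ℝ)))) →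
      g1 y = (n : ℝ) - 1)
    (hg1b : ∀ n : ℕ, 2 ≤ n → ∀ y : ℝ,
      (n : ℝ) - 1 + 1 / (2 * β) * Real.log (L (Real.exp (2 * (n : ℝ)))) ≤ y →
      y < (n : ℝ) + 1 / (2 * β) * Real.log (L (Real.exp (2 * (n : ℝ)))) →
      g1 y = y - 1 / (2 * β) * Real.log (L (Real.exp (2 * (n : ℝ)))))
    (hgt1 : ∀ n : ℕ, 2 ≤ n → ∀ y : ℝ,
      (n : ℝ) - 1 + 1 / (2 * β) * Real.log (L (Real.exp (2 * (n : ℝ) - 2))) ≤ y →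
      y < (n : ℝ) + 1 / (2 * β) * Real.log (L (Real.exp (2 * (n : ℝ)))) →
      gt1 y = y - 1 / (2 * β) * Real.log (L (Real.exp (2 * (n : ℝ) - 2)))) :
    Tendsto (fun y => gt1 y - g1 y) atTop (nhds 0) :=
  stmt7_general L hL β g1 gt1 hg1a hg1b hgt1
end

section
/- Let L be slowly varying at infinity and β > 0. Define g̃₁*(y) = (1/(2β)) log L(e^{2n-2}) whenever n-1 + (1/(2β))log L(e^{2n-2}) ≤ y < n + (1/(2β))log L(e^{2n}) for integer n ≥ 2. Then for every A > 0, g̃₁*(log(Ax)) - g̃₁*(log x) → 0 as x → ∞. -/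
/-!
With `c n = (1/(2β)) log L(e^(2n))`, the function `g̃₁*` equals `c n` on
`[n + c n, n + 1 + c (n+1))`. Slow variation of `L` at the single ratio `e²` gives
`c (n+1) - c n → 0`. So the breakpoints `n + c n` are eventually spaced by almost exactly `1`,
a shift of the argument by `log A` crosses boundedly many (about `|log A|`) of them, and over
boundedly many steps `c` changes arbitrarily little.
-/

open Filter Topology Set

theorem tendsto_log_sub_log_of_tendsto_div_one {α : Type*} {l : Filter α} {u v : α → ℝ}
    (h : Tendsto (fun x => u x / v x) l (𝓝 1)) :
    Tendsto (fun x => Real.log (u x) - Real.log (v x)) l (𝓝 0) := by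
  have hlog : Tendsto (fun x => Real.log (u x / v x)) l (𝓝 0) := by
    simpa [Function.comp_def] using (Real.continuousAt_log one_ne_zero).tendsto.comp h
  refine hlog.congr' ?_
  filter_upwards [h.eventually_ne one_ne_zero] with x hx
  obtain ⟨hu, hv⟩ := div_ne_zero_iff.mp hx
  exact Real.log_div hu hv

theorem exists_mem_Ico_succ_of_tendsto_atTop {α : Type*} [LinearOrder α] [NoMaxOrder α]
    {e : ℕ → α} (he : Tendsto e atTop atTop) {N : ℕ} {y : α} (hy : e N ≤ y) :
    ∃ n ≥ N, y ∈ Ico (e n) (e (n + 1)) := by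
  by_contra! h
  have hle : ∀ n ≥ N, e n ≤ y := fun n hn =>
    Nat.le_induction hy (fun k hk ih => not_lt.mp fun hlt => h k hk ⟨ih, hlt⟩) n hn
  obtain ⟨n, hgt, hn⟩ := ((he.eventually_gt_atTop y).and (eventually_ge_atTop N)).exists
  exact (hle n hn).not_gt hgt

section SlowIncrements

variable {c : ℕ → ℝ}

theorem exists_abs_sub_le_mul_of_tendsto_sub_succ
    (hc : Tendsto (fun n => c (n + 1) - c n) atTop (𝓝 0)) {δ : ℝ} (hδ : 0 < δ) :
    ∃ N, ∀ i ≥ N, ∀ j ≥ N, |c j - c i| ≤ δ * |(j : ℝ) - i| := by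
  obtain ⟨N, hN⟩ := Metric.tendsto_atTop.mp hc δ hδ
  have hforward : ∀ i ≥ N, ∀ j ≥ i, |c j - c i| ≤ δ * ((j : ℝ) - i) := by
    intro i hi j hij
    have hsum := dist_le_Ico_sum_of_dist_le (f := c) hij (d := fun _ => δ) fun hk _ => by
      rw [Real.dist_eq, abs_sub_comm]
      simpa [Real.dist_eq] using (hN _ (hi.trans hk)).le
    simpa [Real.dist_eq, abs_sub_comm, mul_comm, Nat.cast_sub hij] using hsum
  refine ⟨N, fun i hi j hj => ?_⟩
  rcases le_total i j with hij | hji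
  · rw [abs_of_nonneg (sub_nonneg.mpr (Nat.cast_le.mpr hij : (i : ℝ) ≤ j))]
    exact hforward i hi j hij
  · rw [abs_sub_comm, abs_sub_comm (j : ℝ),
      abs_of_nonneg (sub_nonneg.mpr (Nat.cast_le.mpr hji : (j : ℝ) ≤ i))]
    exact hforward j hj i hji

theorem tendsto_natCast_add_atTop_of_tendsto_sub_succ
    (hc : Tendsto (fun n => c (n + 1) - c n) atTop (𝓝 0)) :
    Tendsto (fun n : ℕ => (n : ℝ) + c n) atTop atTop := by
  obtain ⟨N, hN⟩ := exists_abs_sub_le_mul_of_tendsto_sub_succ hc one_half_pos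
  have hlin : Tendsto (fun n : ℕ => (n : ℝ) / 2 + (c N - N / 2)) atTop atTop :=
    (tendsto_natCast_atTop_atTop.atTop_div_const two_pos).atTop_add tendsto_const_nhds
  refine tendsto_atTop_mono' atTop ?_ hlin
  filter_upwards [eventually_ge_atTop N] with n hn
  have hcn := hN N le_rfl n hn
  rw [abs_of_nonneg (sub_nonneg.mpr (Nat.cast_le.mpr hn : (N : ℝ) ≤ n))] at hcn
  linarith [neg_abs_le (c n - c N)]

theorem abs_sub_le_of_mem_Ico_of_add_mem_Ico {δ : ℝ} (hδ : δ ≤ 1 / 2) {N : ℕ}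
    (hN : ∀ i ≥ N, ∀ j ≥ N, |c j - c i| ≤ δ * |(j : ℝ) - i|) {m n : ℕ} (hm : N ≤ m) (hn : N ≤ n)
    {y a : ℝ} (hy : y ∈ Ico ((n : ℝ) + c n) (n + 1 + c (n + 1)))
    (hya : y + a ∈ Ico ((m : ℝ) + c m) (m + 1 + c (m + 1))) :
    |(m : ℝ) - n| ≤ 2 * |a| + 1 := by
  obtain ⟨hny, hyn⟩ := hy
  obtain ⟨hmya, hyam⟩ := hya
  rcases lt_trichotomy m n with hmn | rfl | hnm
  · have hk : (m : ℝ) + 1 ≤ n := by exact_mod_cast hmn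
    have hgap := hN (m + 1) (by omega) n hn
    push_cast at hgap
    rw [abs_of_nonneg (sub_nonneg.mpr hk)] at hgap
    rw [abs_of_neg (by linarith : (m : ℝ) - n < 0)]
    linarith [mul_le_mul_of_nonneg_right hδ (sub_nonneg.mpr hk), neg_abs_le (c n - c (m + 1)),
      neg_le_abs a]
  · simp only [sub_self, abs_zero]; positivity
  · have hk : (n : ℝ) + 1 ≤ m := by exact_mod_cast hnm
    have hgap := hN (n + 1) (by omega) m hm
    push_cast at hgap
    rw [abs_of_nonneg (sub_nonneg.mpr hk)] at hgap
    rw [abs_of_pos (by linarith : (0 : ℝ) < m - n)]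
    linarith [mul_le_mul_of_nonneg_right hδ (sub_nonneg.mpr hk), neg_abs_le (c m - c (n + 1)),
      le_abs_self a]

variable {g : ℝ → ℝ} {N₀ : ℕ}

theorem eventually_abs_sub_le_of_eq_on_Ico
    (hc : Tendsto (fun n => c (n + 1) - c n) atTop (𝓝 0))
    (hg : ∀ n ≥ N₀, ∀ y ∈ Ico ((n : ℝ) + c n) (n + 1 + c (n + 1)), g y = c n)
    (a : ℝ) {δ : ℝ} (hδ₀ : 0 < δ) (hδ : δ ≤ 1 / 2) :
    ∀ᶠ y in atTop, |g (y + a) - g y| ≤ δ * (2 * |a| + 1) := by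
  obtain ⟨N, hN⟩ := exists_abs_sub_le_mul_of_tendsto_sub_succ hc hδ₀
  have he := tendsto_natCast_add_atTop_of_tendsto_sub_succ hc
  let M := max N N₀
  filter_upwards [eventually_ge_atTop ((M : ℝ) + c M), eventually_ge_atTop ((M : ℝ) + c M - a)]
    with y hy hya
  obtain ⟨n, hn, hyn⟩ := exists_mem_Ico_succ_of_tendsto_atTop he hy
  obtain ⟨m, hm, hyam⟩ := exists_mem_Ico_succ_of_tendsto_atTop he (by linarith : _ ≤ y + a)
  push_cast at hyn hyam
  rw [hg m (le_of_max_le_right hm) _ hyam, hg n (le_of_max_le_right hn) _ hyn]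
  calc |c m - c n| ≤ δ * |(m : ℝ) - n| := hN n (le_of_max_le_left hn) m (le_of_max_le_left hm)
    _ ≤ δ * (2 * |a| + 1) := by
      gcongr
      exact abs_sub_le_of_mem_Ico_of_add_mem_Ico hδ hN (le_of_max_le_left hm)
        (le_of_max_le_left hn) hyn hyam

theorem tendsto_sub_comp_add_of_eq_on_Ico
    (hc : Tendsto (fun n => c (n + 1) - c n) atTop (𝓝 0))
    (hg : ∀ n ≥ N₀, ∀ y ∈ Ico ((n : ℝ) + c n) (n + 1 + c (n + 1)), g y = c n) (a : ℝ) :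
    Tendsto (fun y => g (y + a) - g y) atTop (𝓝 0) := by
  rw [Metric.tendsto_nhds]
  intro ε hε
  have hK : 0 < 2 * |a| + 1 := by positivity
  set δ := min (1 / 2) (ε / (2 * (2 * |a| + 1)))
  have hδ₀ : 0 < δ := lt_min one_half_pos (by positivity)
  filter_upwards [eventually_abs_sub_le_of_eq_on_Ico hc hg a hδ₀ (min_le_left _ _)] with y hy
  rw [Real.dist_eq, sub_zero]
  calc |g (y + a) - g y| ≤ δ * (2 * |a| + 1) := hy
    _ ≤ ε / (2 * (2 * |a| + 1)) * (2 * |a| + 1) := by gcongr; exact min_le_right _ _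
    _ < ε := by field_simp; linarith

end SlowIncrements

theorem stmt8_general (L : ℝ → ℝ)
    (hL : ∀ a : ℝ, 0 < a → Tendsto (fun x => L (a * x) / L x) atTop (nhds 1))
    (β : ℝ) (gstar : ℝ → ℝ)
    (hgstar : ∀ n : ℕ, 2 ≤ n → ∀ y : ℝ,
      (n : ℝ) - 1 + 1 / (2 * β) * Real.log (L (Real.exp (2 * (n : ℝ) - 2))) ≤ y →
      y < (n : ℝ) + 1 / (2 * β) * Real.log (L (Real.exp (2 * (n : ℝ)))) →
      gstar y = 1 / (2 * β) * Real.log (L (Real.exp (2 * (n : ℝ) - 2)))) :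
    ∀ A : ℝ, 0 < A →
      Tendsto (fun x => gstar (Real.log (A * x)) - gstar (Real.log x)) atTop (nhds 0) := by
  intro A hA
  set c : ℕ → ℝ := fun n => 1 / (2 * β) * Real.log (L (Real.exp (2 * n))) with hc_def
  have hexp : Tendsto (fun n : ℕ => Real.exp (2 * n)) atTop atTop :=
    Real.tendsto_exp_atTop.comp (tendsto_natCast_atTop_atTop.const_mul_atTop two_pos)
  have hc : Tendsto (fun n => c (n + 1) - c n) atTop (𝓝 0) := by
    have hlog := tendsto_log_sub_log_of_tendsto_div_one ((hL _ (Real.exp_pos 2)).comp hexp)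
    convert hlog.const_mul (1 / (2 * β)) using 2 with n
    · simp only [hc_def, ← Real.exp_add]
      push_cast
      ring_nf
    · simp
  have hg : ∀ n : ℕ, n ≥ 1 → ∀ y ∈ Ico ((n : ℝ) + c n) (n + 1 + c (n + 1)), gstar y = c n := by
    rintro n hn y ⟨hny, hyn⟩
    have hshift : 2 * ((n + 1 : ℕ) : ℝ) - 2 = 2 * n := by push_cast; ring
    have := hgstar (n + 1) (by omega) y
    rw [hshift] at this
    push_cast at this
    exact this (by linarith) (by simpa [hc_def, add_assoc] using hyn)
  have hlim := (tendsto_sub_comp_add_of_eq_on_Ico hc hg (Real.log A)).comp Real.tendsto_log_atTop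
  refine hlim.congr' ?_
  filter_upwards [eventually_gt_atTop 0] with x hx
  simp [Real.log_mul hA.ne' hx.ne', add_comm]

/-- For `L` slowly varying and `β > 0`, the step function
`g̃₁*(y) = (1/(2β)) log L(e^(2n-2))` on the `n`-th interval satisfies
`g̃₁*(log(Ax)) - g̃₁*(log x) → 0` as `x → ∞`, for every `A > 0`. -/
theorem stmt8 (L : ℝ → ℝ) (hLpos : ∀ x, 0 < L x)
    (hL : ∀ a : ℝ, 0 < a → Tendsto (fun x => L (a * x) / L x) atTop (nhds 1))
    (β : ℝ) (hβ : 0 < β) (gstar : ℝ → ℝ)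
    (hgstar : ∀ n : ℕ, 2 ≤ n → ∀ y : ℝ,
      (n : ℝ) - 1 + 1 / (2 * β) * Real.log (L (Real.exp (2 * (n : ℝ) - 2))) ≤ y →
      y < (n : ℝ) + 1 / (2 * β) * Real.log (L (Real.exp (2 * (n : ℝ)))) →
      gstar y = 1 / (2 * β) * Real.log (L (Real.exp (2 * (n : ℝ) - 2)))) :
    ∀ A : ℝ, 0 < A →
      Tendsto (fun x => gstar (Real.log (A * x)) - gstar (Real.log x)) atTop (nhds 0) :=
  stmt8_general L hL β gstar hgstar
end

section
/- Suppose h₁, h₂: ℕ → (0,∞) satisfy h₂(x)/h₁(x) → c₁ > 0 and h₁(x+j)/h₁(x) → 1 as x → ∞ for each fixed integer j. If (1/ν) log c₁ is not an integer, then for all sufficiently large n, the integer l(n) := n - 1 + ⌈(1/ν) log c₁⌉ satisfies h₂(l(n)) e^{-ν l(n)} ≤ h₁(n-1) e^{-ν(n-1)} < h₂(l(n) - 1) e^{-ν(l(n)-1)}. -/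
open Filter

/-- If `h₂(x)/h₁(x) → c₁ > 0` and `h₁(x+j)/h₁(x) → 1` for each fixed integer `j`, and
`(1/ν) log c₁` is not an integer, then for all large `n` the index
`l(n) = n - 1 + ⌈(1/ν) log c₁⌉` satisfies
`h₂(l(n)) e^{-ν l(n)} ≤ h₁(n-1) e^{-ν(n-1)} < h₂(l(n)-1) e^{-ν(l(n)-1)}`. -/
theorem stmt14 (h1 h2 : ℤ → ℝ) (ν c1 : ℝ) (hν : 0 < ν) (hc1 : 0 < c1)
    (hpos1 : ∀ n, 0 < h1 n) (hpos2 : ∀ n, 0 < h2 n)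
    (hratio : Tendsto (fun n : ℤ => h2 n / h1 n) atTop (nhds c1))
    (hshift : ∀ j : ℤ, Tendsto (fun n : ℤ => h1 (n + j) / h1 n) atTop (nhds 1))
    (hnotint : ∀ k : ℤ, (1 / ν) * Real.log c1 ≠ (k : ℝ)) :
    ∀ᶠ n : ℤ in atTop,
      h2 (n - 1 + ⌈(1 / ν) * Real.log c1⌉)
          * Real.exp (-ν * ((n : ℝ) - 1 + ((⌈(1 / ν) * Real.log c1⌉ : ℤ) : ℝ)))
        ≤ h1 (n - 1) * Real.exp (-ν * ((n : ℝ) - 1)) ∧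
      h1 (n - 1) * Real.exp (-ν * ((n : ℝ) - 1))
        < h2 (n - 1 + ⌈(1 / ν) * Real.log c1⌉ - 1)
            * Real.exp (-ν * ((n : ℝ) - 1 + ((⌈(1 / ν) * Real.log c1⌉ : ℤ) : ℝ) - 1)) := by
  set k := ⌈(1 / ν) * Real.log c1⌉ with hkdef
  have hlt1 : Real.log c1 < ν * (k : ℝ) := by
    have h := Int.le_ceil ((1 / ν) * Real.log c1)
    have h' : (1 / ν) * Real.log c1 < (k : ℝ) := lt_of_le_of_ne h (hnotint k)
    have := mul_lt_mul_of_pos_left h' hν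
    calc Real.log c1 = ν * ((1 / ν) * Real.log c1) := by field_simp
      _ < ν * (k : ℝ) := this
  have hlt2 : ν * ((k : ℝ) - 1) < Real.log c1 := by
    have h := Int.ceil_lt_add_one ((1 / ν) * Real.log c1)
    have h' : (k : ℝ) - 1 < (1 / ν) * Real.log c1 := by linarith
    have := mul_lt_mul_of_pos_left h' hν
    calc ν * ((k : ℝ) - 1) < ν * ((1 / ν) * Real.log c1) := this
      _ = Real.log c1 := by field_simp
  have hc1e : c1 < Real.exp (ν * (k : ℝ)) := by
    calc c1 = Real.exp (Real.log c1) := (Real.exp_log hc1).symm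
      _ < Real.exp (ν * (k : ℝ)) := Real.exp_lt_exp.mpr hlt1
  have hec1 : Real.exp (ν * ((k : ℝ) - 1)) < c1 := by
    calc Real.exp (ν * ((k : ℝ) - 1)) < Real.exp (Real.log c1) := Real.exp_lt_exp.mpr hlt2
      _ = c1 := Real.exp_log hc1
  have key : ∀ j : ℤ, Tendsto (fun n : ℤ => h2 (n + j) / h1 n) atTop (nhds c1) := by
    intro j
    have hcomp : Tendsto (fun n : ℤ => n + j) atTop atTop :=
      tendsto_atTop_add_const_right _ j tendsto_id
    have hr : Tendsto (fun n : ℤ => h2 (n + j) / h1 (n + j)) atTop (nhds c1) :=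
      hratio.comp hcomp
    have := hr.mul (hshift j)
    rw [mul_one] at this
    refine this.congr fun n => ?_
    field_simp
    rw [mul_comm (h2 (n + j)) (h1 (n + j)), mul_div_mul_left _ _ (hpos1 (n + j)).ne']
  have E1 : ∀ᶠ n : ℤ in atTop, h2 (n + k) / h1 n < Real.exp (ν * (k : ℝ)) :=
    (key k).eventually_lt_const hc1e
  have E2 : ∀ᶠ n : ℤ in atTop,
      Real.exp (ν * ((k : ℝ) - 1)) < h2 (n + (k - 1)) / h1 n := by
    exact (key (k - 1)).eventually_const_lt hec1
  have hm : Tendsto (fun n : ℤ => n - 1) atTop atTop :=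
    tendsto_atTop_add_const_right _ (-1) tendsto_id
  filter_upwards [hm.eventually E1, hm.eventually E2] with n hA hB
  have hA' : h2 (n - 1 + k) < Real.exp (ν * (k : ℝ)) * h1 (n - 1) :=
    (div_lt_iff₀ (hpos1 _)).mp hA
  have hB' : Real.exp (ν * ((k : ℝ) - 1)) * h1 (n - 1) < h2 (n - 1 + (k - 1)) :=
    (lt_div_iff₀ (hpos1 _)).mp hB
  have hidx : n - 1 + (k - 1) = n - 1 + k - 1 := by ring
  rw [hidx] at hB'
  constructor
  · have := mul_lt_mul_of_pos_right hA'
      (Real.exp_pos (-ν * ((n : ℝ) - 1 + (k : ℝ))))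
    calc h2 (n - 1 + k) * Real.exp (-ν * ((n : ℝ) - 1 + (k : ℝ)))
        ≤ Real.exp (ν * (k : ℝ)) * h1 (n - 1) * Real.exp (-ν * ((n : ℝ) - 1 + (k : ℝ))) :=
          le_of_lt this
      _ = h1 (n - 1) * Real.exp (-ν * ((n : ℝ) - 1)) := by
          rw [mul_comm (Real.exp (ν * (k : ℝ))) (h1 (n - 1)), mul_assoc, ← Real.exp_add]
          congr 1; ring
  · have := mul_lt_mul_of_pos_right hB'
      (Real.exp_pos (-ν * ((n : ℝ) - 1 + (k : ℝ) - 1)))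
    calc h1 (n - 1) * Real.exp (-ν * ((n : ℝ) - 1))
        = Real.exp (ν * ((k : ℝ) - 1)) * h1 (n - 1)
            * Real.exp (-ν * ((n : ℝ) - 1 + (k : ℝ) - 1)) := by
          rw [mul_comm (Real.exp _) (h1 (n - 1)), mul_assoc, ← Real.exp_add]
          congr 1; ring
      _ < h2 (n - 1 + k - 1) * Real.exp (-ν * ((n : ℝ) - 1 + (k : ℝ) - 1)) := this
end

section
/- Fix β > 0, ν > 0 with 2β > ν, constants n₁ ∈ ℕ, and a slowly varying function L together with h₁: ℕ → (0,∞) satisfying h₁(m+1)/h₁(m) → 1. Then the partial sums I_n := (e^{ν(n-1)}/(h₁(n-1)e^{2β(n-1)}L(e^{2n-2}))) Σ_{m=n₁}^{n-2} L(e^{2m}) e^{2βm} h₁(m) e^{-νm} (1 - (h₁(m+1)/h₁(m)) e^{-ν}) converge, as n → ∞, to (1 - e^{-ν}) e^{ν - 2β}/(1 - e^{ν - 2β}). -/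
open Filter Topology Finset

/-!
Write `b m = L(e^{2m}) e^{2βm} h₁(m) e^{-νm}` and `c m = 1 - (h₁(m+1)/h₁(m)) e^{-ν}`, so that
`I_n = S_{n-2} / b_{n-1}` with `S_N = ∑_{m=n₁}^{N} b_m c_m`. Since `L` is slowly varying and
`h₁(m+1)/h₁(m) → 1`, `b_m / b_{m+1} → t := e^{ν-2β} < 1`, and `c_m → c := 1 - e^{-ν}`.
The quotients `u_N = S_N / b_{N+1}` satisfy the affine recursion
`u_{N+1} = (b_{N+1}/b_{N+2}) (u_N + c_{N+1})`, whose coefficients converge to `t` and `c t`;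
as `|t| < 1` the recursion is asymptotically a contraction, so `u_N → c t / (1 - t)`.
-/

theorem tendsto_zero_of_norm_succ_le_mul_add {E : Type*} [SeminormedAddGroup E]
    {v : ℕ → E} {e : ℕ → ℝ} {q : ℝ} (hq0 : 0 ≤ q) (hq1 : q < 1)
    (he : Tendsto e atTop (𝓝 0)) (hrec : ∀ᶠ n in atTop, ‖v (n + 1)‖ ≤ q * ‖v n‖ + e n) :
    Tendsto v atTop (𝓝 0) := by
  refine NormedAddGroup.tendsto_nhds_zero.2 fun ε hε => ?_
  have hsmall : ∀ᶠ n in atTop, e n ≤ ε / 2 * (1 - q) :=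
    he.eventually (ge_mem_nhds (mul_pos (half_pos hε) (sub_pos.2 hq1)))
  obtain ⟨M, hM⟩ := eventually_atTop.1 (hrec.and hsmall)
  have hiter : ∀ k, ‖v (M + k)‖ ≤ q ^ k * ‖v M‖ + ε / 2 := by
    intro k
    induction k with
    | zero => simp only [add_zero, pow_zero, one_mul]; linarith
    | succ k ih =>
      obtain ⟨hstep, he_le⟩ := hM (M + k) (Nat.le_add_right _ _)
      calc ‖v (M + k + 1)‖ ≤ q * ‖v (M + k)‖ + e (M + k) := hstep
        _ ≤ q * (q ^ k * ‖v M‖ + ε / 2) + ε / 2 * (1 - q) := by gcongr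
        _ = q ^ (k + 1) * ‖v M‖ + ε / 2 := by ring
  have hpow : ∀ᶠ k in atTop, q ^ k * ‖v M‖ < ε / 2 := by
    have := (tendsto_pow_atTop_nhds_zero_of_lt_one hq0 hq1).mul_const ‖v M‖
    rw [zero_mul] at this
    exact this.eventually (gt_mem_nhds (half_pos hε))
  obtain ⟨K, hK⟩ := eventually_atTop.1 hpow
  filter_upwards [eventually_ge_atTop (M + K)] with n hn
  obtain ⟨k, rfl⟩ := Nat.exists_eq_add_of_le (le_of_add_le_left hn)
  linarith [hiter k, hK k (by omega)]

theorem tendsto_of_eventually_succ_eq_mul_add {𝕜 : Type*} [NormedField 𝕜]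
    {u q w : ℕ → 𝕜} {t c : 𝕜} (ht : ‖t‖ < 1)
    (hq : Tendsto q atTop (𝓝 t)) (hw : Tendsto w atTop (𝓝 c))
    (hrec : ∀ᶠ N in atTop, u (N + 1) = q N * u N + w N) :
    Tendsto u atTop (𝓝 (c / (1 - t))) := by
  set l := c / (1 - t)
  have hl : c + (t - 1) * l = 0 := by
    have : (1 : 𝕜) - t ≠ 0 := sub_ne_zero.2 fun h => by simp [← h] at ht
    simp only [l]
    field_simp
    ring
  -- `u - l` obeys the same recursion up to an error term that tends to zero
  have herr : Tendsto (fun N => w N + (q N - 1) * l) atTop (𝓝 0) := by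
    simpa only [hl] using hw.add ((hq.sub_const 1).mul_const l)
  have hqle : ∀ᶠ N in atTop, ‖q N‖ ≤ (1 + ‖t‖) / 2 :=
    hq.norm.eventually (ge_mem_nhds (by linarith))
  rw [← tendsto_sub_nhds_zero_iff]
  refine tendsto_zero_of_norm_succ_le_mul_add (q := (1 + ‖t‖) / 2) (by positivity) (by linarith)
    (tendsto_norm_zero.comp herr) ?_
  filter_upwards [hrec, hqle] with N hN hqN
  calc ‖u (N + 1) - l‖ = ‖q N * (u N - l) + (w N + (q N - 1) * l)‖ := by rw [hN]; ring_nf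
    _ ≤ ‖q N‖ * ‖u N - l‖ + ‖w N + (q N - 1) * l‖ := by
        grw [norm_add_le, norm_mul]
    _ ≤ (1 + ‖t‖) / 2 * ‖u N - l‖ + ‖w N + (q N - 1) * l‖ := by gcongr

theorem tendsto_sum_Icc_mul_div_succ {𝕜 : Type*} [NormedField 𝕜]
    {a b : ℕ → 𝕜} {t c : 𝕜} (n₀ : ℕ) (hb : ∀ m, b m ≠ 0) (ht : ‖t‖ < 1)
    (hbt : Tendsto (fun m => b m / b (m + 1)) atTop (𝓝 t)) (ha : Tendsto a atTop (𝓝 c)) :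
    Tendsto (fun N => (∑ m ∈ Icc n₀ N, b m * a m) / b (N + 1)) atTop
      (𝓝 (c * t / (1 - t))) := by
  have hq : Tendsto (fun N => b (N + 1) / b (N + 2)) atTop (𝓝 t) :=
    hbt.comp (tendsto_add_atTop_nat 1)
  refine tendsto_of_eventually_succ_eq_mul_add ht hq
    ((ha.comp (tendsto_add_atTop_nat 1)).mul hq) ?_
  filter_upwards [eventually_ge_atTop n₀] with N hN
  have := hb (N + 1)
  have := hb (N + 2)
  rw [sum_Icc_succ_top (Nat.le_succ_of_le hN)]
  simp only [Function.comp]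
  field_simp

noncomputable def weight (L : ℝ → ℝ) (h1 : ℕ → ℝ) (ν β : ℝ) (m : ℕ) : ℝ :=
  L (Real.exp (2 * (m : ℝ))) * Real.exp (2 * β * (m : ℝ)) * h1 m * Real.exp (-ν * (m : ℝ))

theorem weight_pos (L : ℝ → ℝ) (hLpos : ∀ x, 0 < L x) (h1 : ℕ → ℝ) (hpos : ∀ n, 0 < h1 n)
    (ν β : ℝ) (m : ℕ) : 0 < weight L h1 ν β m := by
  have := hLpos (Real.exp (2 * (m : ℝ)))
  have := hpos m
  unfold weight
  positivity

theorem inv_weight_pred (L : ℝ → ℝ) (hLpos : ∀ x, 0 < L x) (h1 : ℕ → ℝ)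
    (hpos : ∀ n, 0 < h1 n) (ν β : ℝ) {n : ℕ} (hn : 1 ≤ n) :
    (weight L h1 ν β (n - 1))⁻¹ = Real.exp (ν * ((n : ℝ) - 1))
      / (h1 (n - 1) * Real.exp (2 * β * ((n : ℝ) - 1)) * L (Real.exp (2 * (n : ℝ) - 2))) := by
  have := hLpos (Real.exp (2 * (n : ℝ) - 2))
  have := hpos (n - 1)
  rw [weight, Nat.cast_pred hn, show 2 * ((n : ℝ) - 1) = 2 * n - 2 by ring, neg_mul,
    Real.exp_neg]
  field_simp

theorem weight_div_weight_succ (L : ℝ → ℝ) (hLpos : ∀ x, 0 < L x) (h1 : ℕ → ℝ)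
    (hpos : ∀ n, 0 < h1 n) (ν β : ℝ) (m : ℕ) :
    weight L h1 ν β m / weight L h1 ν β (m + 1)
      = (L (Real.exp 2 * Real.exp (2 * (m : ℝ))) / L (Real.exp (2 * (m : ℝ))))⁻¹
        * (h1 (m + 1) / h1 m)⁻¹ * Real.exp (ν - 2 * β) := by
  have := (hLpos (Real.exp 2 * Real.exp (2 * (m : ℝ)))).ne'
  have := (hLpos (Real.exp (2 * (m : ℝ)))).ne'
  have := (hpos m).ne'
  have := (hpos (m + 1)).ne'
  simp only [weight, Nat.cast_succ, ← Real.exp_add]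
  rw [show 2 + 2 * (m : ℝ) = 2 * (m + 1) by ring,
    show ν - 2 * β = 2 * β * m + -ν * m - (2 * β * (m + 1) + -ν * (m + 1)) by ring,
    Real.exp_sub, Real.exp_add, Real.exp_add]
  field_simp

theorem tendsto_weight_div_weight_succ (L : ℝ → ℝ) (hLpos : ∀ x, 0 < L x)
    (hL : ∀ a : ℝ, 0 < a → Tendsto (fun x => L (a * x) / L x) atTop (𝓝 1))
    (h1 : ℕ → ℝ) (hpos : ∀ n, 0 < h1 n)
    (hratio : Tendsto (fun n : ℕ => h1 (n + 1) / h1 n) atTop (𝓝 1)) (ν β : ℝ) :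
    Tendsto (fun m => weight L h1 ν β m / weight L h1 ν β (m + 1)) atTop
      (𝓝 (Real.exp (ν - 2 * β))) := by
  have hexp : Tendsto (fun m : ℕ => Real.exp (2 * (m : ℝ))) atTop atTop :=
    Real.tendsto_exp_atTop.comp (tendsto_natCast_atTop_atTop.const_mul_atTop two_pos)
  have hL2 := ((hL _ (Real.exp_pos 2)).comp hexp).inv₀ one_ne_zero
  have := (hL2.mul (hratio.inv₀ one_ne_zero)).mul_const (Real.exp (ν - 2 * β))
  simp only [inv_one, one_mul] at this
  exact this.congr fun m => (weight_div_weight_succ L hLpos h1 hpos ν β m).symm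

theorem stmt15_general (L : ℝ → ℝ) (hLpos : ∀ x, 0 < L x)
    (hL : ∀ a : ℝ, 0 < a → Tendsto (fun x => L (a * x) / L x) atTop (nhds 1))
    (h1 : ℕ → ℝ) (hpos : ∀ n, 0 < h1 n)
    (hratio : Tendsto (fun n : ℕ => h1 (n + 1) / h1 n) atTop (nhds 1))
    (ν β : ℝ) (hνβ : ν < 2 * β) (n₁ : ℕ) :
    Tendsto (fun n : ℕ =>
        Real.exp (ν * ((n : ℝ) - 1))
            / (h1 (n - 1) * Real.exp (2 * β * ((n : ℝ) - 1)) * L (Real.exp (2 * (n : ℝ) - 2)))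
          * ∑ m ∈ Finset.Icc n₁ (n - 2),
              L (Real.exp (2 * (m : ℝ))) * Real.exp (2 * β * (m : ℝ)) * h1 m
                * Real.exp (-ν * (m : ℝ)) * (1 - h1 (m + 1) / h1 m * Real.exp (-ν)))
      atTop
      (nhds ((1 - Real.exp (-ν)) * Real.exp (ν - 2 * β) / (1 - Real.exp (ν - 2 * β)))) := by
  have ht : ‖Real.exp (ν - 2 * β)‖ < 1 := by
    rw [Real.norm_eq_abs, abs_of_pos (Real.exp_pos _), Real.exp_lt_one_iff]
    linarith
  have hc : Tendsto (fun m : ℕ => 1 - h1 (m + 1) / h1 m * Real.exp (-ν)) atTop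
      (𝓝 (1 - Real.exp (-ν))) := by
    simpa using (hratio.mul_const (Real.exp (-ν))).const_sub 1
  have hlim := (tendsto_sum_Icc_mul_div_succ n₁ (fun m => (weight_pos L hLpos h1 hpos ν β m).ne')
    ht (tendsto_weight_div_weight_succ L hLpos hL h1 hpos hratio ν β) hc).comp
    (tendsto_sub_atTop_nat 2)
  refine hlim.congr' ?_
  filter_upwards [eventually_ge_atTop 2] with n hn
  rw [← inv_weight_pred L hLpos h1 hpos ν β (by omega), Function.comp_apply,
    show n - 2 + 1 = n - 1 by omega, div_eq_inv_mul]
  rfl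

/-- With `L` slowly varying, `h₁` positive with `h₁(m+1)/h₁(m) → 1`, and `0 < ν < 2β`, the
normalized partial sums `I_n` converge to `(1 - e^{-ν}) e^{ν-2β}/(1 - e^{ν-2β})`. -/
theorem stmt15 (L : ℝ → ℝ) (hLpos : ∀ x, 0 < L x)
    (hL : ∀ a : ℝ, 0 < a → Tendsto (fun x => L (a * x) / L x) atTop (nhds 1))
    (h1 : ℕ → ℝ) (hpos : ∀ n, 0 < h1 n)
    (hratio : Tendsto (fun n : ℕ => h1 (n + 1) / h1 n) atTop (nhds 1))
    (ν β : ℝ) (hν : 0 < ν) (hβ : 0 < β) (hνβ : ν < 2 * β) (n₁ : ℕ) :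
    Tendsto (fun n : ℕ =>
        Real.exp (ν * ((n : ℝ) - 1))
            / (h1 (n - 1) * Real.exp (2 * β * ((n : ℝ) - 1)) * L (Real.exp (2 * (n : ℝ) - 2)))
          * ∑ m ∈ Finset.Icc n₁ (n - 2),
              L (Real.exp (2 * (m : ℝ))) * Real.exp (2 * β * (m : ℝ)) * h1 m
                * Real.exp (-ν * (m : ℝ)) * (1 - h1 (m + 1) / h1 m * Real.exp (-ν)))
      atTop
      (nhds ((1 - Real.exp (-ν)) * Real.exp (ν - 2 * β) / (1 - Real.exp (ν - 2 * β)))) :=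
  stmt15_general L hLpos hL h1 hpos hratio ν β hνβ n₁
end

section
/- Let L be slowly varying at infinity, β > 0, and A_{k_n} = e^{2β(n-1)} L(e^{2n-2}). Fix positive constants b₁, b₂, b₃ with b₂ > b₃, and fix x₀ > 0 with x₀ ≠ e^{2β(r+1-b₁)} for every integer r. Then there are only finitely many integers n for which there exists a positive integer m with m - b₁ + (1/(2β)) log L(e^{2m-b₂}) ≤ (1/(2β)) log(A_{k_n} x₀) < m - b₁ + (1/(2β)) log L(e^{2m-b₃}). -/
/-!
Put `G n = n + (1/(2β)) log L(e^{2n-2})` and `c = log x₀ / (2β) + b₁ - 1`. Since `L` is slowly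
varying, the two inequalities say that `G n - G m + c` lies between two quantities tending to `0`
as `m → ∞`. The increments of `G` tend to `1`, so `G n - G m` differs from `n - m` by at most
`|n - m| / 2 + C`; this bounds the gap `n - m`. For each of the finitely many admissible gaps `j`,
`G (m + j) - G m + c → j + c`, which is nonzero because the hypothesis on `x₀` says exactly that
`c` is not an integer. Hence only small `n` can occur.
-/

open Filter Real Topology

section Increments

variable {α : Type*} [PseudoMetricSpace α] {g : ℕ → α}

theorem dist_le_mul_dist_of_dist_succ_le {ε : ℝ} {N : ℕ}
    (h : ∀ k, N ≤ k → dist (g k) (g (k + 1)) ≤ ε) {m n : ℕ} (hm : N ≤ m) (hn : N ≤ n) :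
    dist (g m) (g n) ≤ ε * dist m n := by
  wlog hmn : m ≤ n generalizing m n
  · rw [dist_comm, dist_comm m]
    exact this hn hm (le_of_not_ge hmn)
  calc dist (g m) (g n) ≤ ∑ _ ∈ Finset.Ico m n, ε :=
        dist_le_Ico_sum_of_dist_le hmn fun hk _ => h _ (hm.trans hk)
    _ = ε * dist m n := by
        rw [Finset.sum_const, Nat.card_Ico, nsmul_eq_mul, ← Nat.dist_cast_real, dist_comm,
          Real.dist_eq, abs_of_nonneg (by simpa using hmn), Nat.cast_sub hmn, mul_comm]

theorem exists_dist_le_mul_dist_add (hg : Tendsto (fun n => dist (g n) (g (n + 1))) atTop (𝓝 0))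
    {ε : ℝ} (hε : 0 < ε) : ∃ C, ∀ m n, dist (g m) (g n) ≤ ε * dist m n + C := by
  obtain ⟨N, hN⟩ := eventually_atTop.1 (hg.eventually_le_const hε)
  set C := ∑ k ∈ Finset.range N, dist (g k) (g N)
  have hC : ∀ k, dist (g k) (g (max k N)) ≤ C := by
    intro k
    rcases lt_or_ge k N with hk | hk
    · rw [max_eq_right hk.le]
      exact Finset.single_le_sum (fun i _ => dist_nonneg) (Finset.mem_range.2 hk)
    · rw [max_eq_left hk, dist_self]
      exact Finset.sum_nonneg fun i _ => dist_nonneg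
  have hmax : ∀ m n : ℕ, dist (max m N) (max n N) ≤ dist m n := by
    intro m n
    simpa only [← Nat.dist_cast_real, Real.dist_eq, Nat.cast_max] using
      abs_max_sub_max_le_abs (m : ℝ) n N
  refine ⟨2 * C, fun m n => ?_⟩
  calc dist (g m) (g n)
      ≤ dist (g m) (g (max m N)) + dist (g (max m N)) (g (max n N)) + dist (g (max n N)) (g n) :=
        dist_triangle4 _ _ _ _
    _ ≤ C + ε * dist m n + C := by
        gcongr
        · exact hC m
        · exact (dist_le_mul_dist_of_dist_succ_le hN (le_max_right _ _) (le_max_right _ _)).trans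
            (mul_le_mul_of_nonneg_left (hmax m n) hε.le)
        · rw [dist_comm]; exact hC n
    _ = ε * dist m n + 2 * C := by ring

end Increments

theorem tendsto_add_nat_sub_of_tendsto_succ_sub {E : Type*} [AddCommGroup E] [TopologicalSpace E]
    [IsTopologicalAddGroup E] {G : ℕ → E} {a : E}
    (hG : Tendsto (fun n => G (n + 1) - G n) atTop (𝓝 a)) (j : ℕ) :
    Tendsto (fun m => G (m + j) - G m) atTop (𝓝 (j • a)) := by
  induction j with
  | zero => simpa using tendsto_const_nhds
  | succ j ih =>
    rw [succ_nsmul']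
    refine ((hG.comp (tendsto_add_atTop_nat j)).add ih).congr fun m => ?_
    simp only [Function.comp_apply, ← add_assoc]
    abel

section IncrementsTendingToOne

variable {G w : ℕ → ℝ} {c : ℝ}

theorem exists_le_add_of_abs_sub_add_le (hG : Tendsto (fun n => G (n + 1) - G n) atTop (𝓝 1))
    (hw : BddAbove (Set.range w)) :
    ∃ K : ℕ, ∀ n m, |G n - G m + c| ≤ w m → n ≤ m + K ∧ m ≤ n + K := by
  set g : ℕ → ℝ := fun n => G n - n
  have hg : Tendsto (fun n => dist (g n) (g (n + 1))) atTop (𝓝 0) := by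
    refine (tendsto_iff_dist_tendsto_zero.1 hG).congr fun n => ?_
    simp only [g, Real.dist_eq, Nat.cast_succ]
    rw [abs_sub_comm]
    ring_nf
  obtain ⟨C, hC⟩ := exists_dist_le_mul_dist_add hg one_half_pos
  obtain ⟨W, hW⟩ := hw
  refine ⟨⌈2 * (W + |c| + C)⌉₊, fun n m hnm => ?_⟩
  have hdist : |(n : ℝ) - m| ≤ 2 * (W + |c| + C) := by
    have hgnm : |g n - g m| ≤ 1 / 2 * |(n : ℝ) - m| + C := by
      simpa only [Real.dist_eq, ← Nat.dist_cast_real] using hC n m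
    have hwm : w m ≤ W := hW (Set.mem_range_self m)
    have : |(n : ℝ) - m| ≤ |G n - G m + c| + |g n - g m| + |c| :=
      calc |(n : ℝ) - m| = |(G n - G m + c) - (g n - g m) - c| := by
            simp only [g]; ring_nf
        _ ≤ |G n - G m + c| + |g n - g m| + |c| :=
          (abs_sub _ _).trans (add_le_add_left (abs_sub _ _) _)
    linarith
  have hK := abs_le.1 (hdist.trans (Nat.le_ceil _))
  constructor <;> · rw [← Nat.cast_le (α := ℝ)]; push_cast; linarith [hK.1, hK.2]

theorem finite_setOf_exists_abs_sub_add_le (hG : Tendsto (fun n => G (n + 1) - G n) atTop (𝓝 1))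
    (hw : Tendsto w atTop (𝓝 0)) (hc : ∀ k : ℤ, c ≠ k) :
    {n | ∃ m, |G n - G m + c| ≤ w m}.Finite := by
  obtain ⟨K, hK⟩ := exists_le_add_of_abs_sub_add_le (c := c) hG hw.bddAbove_range
  have hgap (j : ℕ) :
      ∀ᶠ m in atTop, w m < |G (m + j) - G m + c| ∧ w (m + j) < |G m - G (m + j) + c| := by
    have hj : Tendsto (fun m => G (m + j) - G m) atTop (𝓝 j) := by
      simpa using tendsto_add_nat_sub_of_tendsto_succ_sub hG j
    have hj' : Tendsto (fun m => G m - G (m + j)) atTop (𝓝 (-j)) := by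
      simpa only [neg_sub] using hj.neg
    refine (hw.eventually_lt (hj.add_const c).abs ?_).and
      ((hw.comp (tendsto_add_atTop_nat j)).eventually_lt (hj'.add_const c).abs ?_)
    · simpa [abs_pos, add_eq_zero_iff_eq_neg'] using hc (-j)
    · simpa [abs_pos, ← sub_eq_neg_add, sub_eq_zero] using hc j
  obtain ⟨N, hN⟩ := eventually_atTop.1
    ((eventually_all_finset (Finset.range (K + 1))).2 fun j _ => hgap j)
  refine (Set.finite_Iio (N + K)).subset fun n ⟨m, hm⟩ => ?_
  by_contra hn
  simp only [Set.mem_Iio, not_lt] at hn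
  obtain ⟨hnK, hmK⟩ := hK n m hm
  rcases le_total m n with hmn | hnm
  · obtain ⟨j, rfl⟩ := Nat.exists_eq_add_of_le hmn
    exact (hN m (by omega) j (Finset.mem_range.2 (by omega))).1.not_ge hm
  · obtain ⟨j, rfl⟩ := Nat.exists_eq_add_of_le hnm
    exact (hN n (by omega) j (Finset.mem_range.2 (by omega))).2.not_ge hm

end IncrementsTendingToOne

def IsSlowlyVarying (L : ℝ → ℝ) : Prop :=
  ∀ a : ℝ, 0 < a → Tendsto (fun x => L (a * x) / L x) atTop (𝓝 1)

theorem IsSlowlyVarying.tendsto_log_exp_add_sub {L : ℝ → ℝ} (hL : IsSlowlyVarying L)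
    (hLpos : ∀ x, 0 < L x) (d : ℝ) :
    Tendsto (fun x => log (L (exp (x + d))) - log (L (exp x))) atTop (𝓝 0) := by
  have hratio := (hL (exp d) (exp_pos d)).comp tendsto_exp_atTop
  have hlog := (continuousAt_log one_ne_zero).tendsto.comp hratio
  rw [log_one] at hlog
  refine hlog.congr fun x => ?_
  rw [Function.comp_apply, Function.comp_apply, exp_add, mul_comm,
    log_div (hLpos _).ne' (hLpos _).ne']

theorem stmt17_general (L : ℝ → ℝ) (hLpos : ∀ x, 0 < L x)
    (hL : ∀ a : ℝ, 0 < a → Filter.Tendsto (fun x => L (a * x) / L x) Filter.atTop (nhds 1))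
    (β b1 b2 b3 : ℝ) (hβ : 0 < β)
    (A : ℕ → ℝ)
    (hA : ∀ n : ℕ, A n = Real.exp (2 * β * ((n : ℝ) - 1)) * L (Real.exp (2 * (n : ℝ) - 2)))
    (x₀ : ℝ) (hx₀ : 0 < x₀)
    (hx₀ne : ∀ r : ℤ, x₀ ≠ Real.exp (2 * β * ((r : ℝ) + 1 - b1))) :
    {n : ℕ | ∃ m : ℕ, 0 < m ∧
      (m : ℝ) - b1 + 1 / (2 * β) * Real.log (L (Real.exp (2 * (m : ℝ) - b2)))
          ≤ 1 / (2 * β) * Real.log (A n * x₀) ∧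
      1 / (2 * β) * Real.log (A n * x₀)
          < (m : ℝ) - b1 + 1 / (2 * β) * Real.log (L (Real.exp (2 * (m : ℝ) - b3)))}.Finite := by
  set ℓ : ℝ → ℝ := fun u => 1 / (2 * β) * log (L (exp u))
  set G : ℕ → ℝ := fun n => n + ℓ (2 * n - 2)
  set D : ℝ → ℕ → ℝ := fun b m => ℓ (2 * m - b) - ℓ (2 * m - 2)
  set c := log x₀ / (2 * β) + b1 - 1
  have hD (b : ℝ) : Tendsto (D b) atTop (𝓝 0) := by
    have h2m : Tendsto (fun m : ℕ => 2 * (m : ℝ) - 2) atTop atTop :=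
      tendsto_atTop_add_const_right _ _ (tendsto_natCast_atTop_atTop.const_mul_atTop two_pos)
    have hshift := (IsSlowlyVarying.tendsto_log_exp_add_sub hL hLpos (2 - b)).comp h2m
    simpa [D, ℓ, ← mul_sub] using hshift.const_mul (1 / (2 * β))
  have hG : Tendsto (fun n => G (n + 1) - G n) atTop (𝓝 1) := by
    have h := (hD 0).const_add 1
    rw [add_zero] at h
    refine h.congr fun n => ?_
    simp only [G, D]
    push_cast
    ring_nf
  have hc (k : ℤ) : c ≠ k := by
    intro hck
    apply hx₀ne k
    rw [← exp_log hx₀, ← hck]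
    congr 1
    simp only [c]
    field_simp
    ring
  have hw : Tendsto (fun m => max |D b2 m| |D b3 m|) atTop (𝓝 0) := by
    simpa using (hD b2).abs.max (hD b3).abs
  refine (finite_setOf_exists_abs_sub_add_le hG hw hc).subset ?_
  rintro n ⟨m, -, hlow, hupp⟩
  have hAn : 1 / (2 * β) * log (A n * x₀) = G n - 1 + log x₀ / (2 * β) := by
    rw [hA, log_mul (mul_pos (exp_pos _) (hLpos _)).ne' hx₀.ne',
      log_mul (exp_pos _).ne' (hLpos _).ne', log_exp]
    simp only [G, ℓ]
    field_simp
    ring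
  rw [hAn] at hlow hupp
  refine ⟨m, abs_le_max_abs_abs (b := G n - G m + c) ?_ ?_⟩
  · simp only [G, D, ℓ, c] at hlow ⊢
    linarith
  · simp only [G, D, ℓ, c] at hupp ⊢
    linarith

/-- Let `L` be slowly varying, `β > 0`, `A_{k_n} = e^{2β(n-1)} L(e^{2n-2})`, and
`b₁, b₂, b₃ > 0` with `b₂ > b₃`. For any `x₀ > 0` not of the form `e^{2β(r+1-b₁)}`, `r ∈ ℤ`,
there are only finitely many `n` for which some positive integer `m` satisfies
`m - b₁ + (1/(2β)) log L(e^{2m-b₂}) ≤ (1/(2β)) log(A_{k_n} x₀) < m - b₁ + (1/(2β)) log L(e^{2m-b₃})`. -/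
theorem stmt17 (L : ℝ → ℝ) (hLpos : ∀ x, 0 < L x)
    (hL : ∀ a : ℝ, 0 < a → Filter.Tendsto (fun x => L (a * x) / L x) Filter.atTop (nhds 1))
    (β b1 b2 b3 : ℝ) (hβ : 0 < β) (hb1 : 0 < b1) (hb2 : 0 < b2) (hb3 : 0 < b3)
    (hb23 : b3 < b2)
    (A : ℕ → ℝ)
    (hA : ∀ n : ℕ, A n = Real.exp (2 * β * ((n : ℝ) - 1)) * L (Real.exp (2 * (n : ℝ) - 2)))
    (x₀ : ℝ) (hx₀ : 0 < x₀)
    (hx₀ne : ∀ r : ℤ, x₀ ≠ Real.exp (2 * β * ((r : ℝ) + 1 - b1))) :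
    {n : ℕ | ∃ m : ℕ, 0 < m ∧
      (m : ℝ) - b1 + 1 / (2 * β) * Real.log (L (Real.exp (2 * (m : ℝ) - b2)))
          ≤ 1 / (2 * β) * Real.log (A n * x₀) ∧
      1 / (2 * β) * Real.log (A n * x₀)
          < (m : ℝ) - b1 + 1 / (2 * β) * Real.log (L (Real.exp (2 * (m : ℝ) - b3)))}.Finite :=
  stmt17_general L hLpos hL β b1 b2 b3 hβ A hA x₀ hx₀ hx₀ne
end
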